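/- Under the hypotheses IC(x⁰) ≤ 1/4, ‖(A_IᵗA_I)⁻¹‖₂ ≤ 2, unit-norm columns, |I| = p, y = Ax⁰ + b with ‖b‖₂ ≤ ε, and x⋆ an ℓ¹ minimizer under the constraint ‖Ax − y‖₂ ≤ ε, one has the ℓ¹ error bound ‖x⋆ − x⁰‖₁ ≤ (ε/3)(14√(2p) + 16p). -/

import Mathlib

open Finset Matrix

/-- ℓ¹ norm of a finitely-indexed real vector. -/
noncomputable def l1 {ι : Type*} [Fintype ι] (x : ι → ℝ) : ℝ := ∑ i, |x i|

/-- ℓ² (Euclidean) norm. -/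
noncomputable def l2 {ι : Type*} [Fintype ι] (x : ι → ℝ) : ℝ := Real.sqrt (∑ i, (x i) ^ 2)

/-- ℓ^∞ norm. -/
noncomputable def linf {ι : Type*} [Fintype ι] (x : ι → ℝ) : ℝ := sSup {y | ∃ i, y = |x i|}

/-- Operator norm induced by the Euclidean norms (spectral norm). -/
noncomputable def opNorm2 {ι κ : Type*} [Fintype ι] [Fintype κ] (M : Matrix ι κ ℝ) : ℝ :=
  sSup {y | ∃ x : κ → ℝ, l2 x ≤ 1 ∧ y = l2 (M.mulVec x)}

/-- Operator norm from ℓ¹ to ℓ². -/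
noncomputable def norm12 {ι κ : Type*} [Fintype ι] [Fintype κ] (M : Matrix ι κ ℝ) : ℝ :=
  sSup {y | ∃ x : κ → ℝ, x ≠ 0 ∧ y = l2 (M.mulVec x) / l1 x}

/-- Submatrix of the columns of `A` indexed by `I`. -/
def colSub {n m : ℕ} (A : Matrix (Fin n) (Fin m) ℝ) (I : Finset (Fin m)) :
    Matrix (Fin n) {j // j ∈ I} ℝ := fun i j => A i j

/-- The Gram matrix `A_Iᵗ A_I`. -/
def gram {n m : ℕ} (A : Matrix (Fin n) (Fin m) ℝ) (I : Finset (Fin m)) :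
    Matrix {j // j ∈ I} {j // j ∈ I} ℝ := (colSub A I)ᵀ * colSub A I

/-- The sign vector of `x` restricted to `I`. -/
noncomputable def signI {m : ℕ} (x : Fin m → ℝ) (I : Finset (Fin m)) : {j // j ∈ I} → ℝ :=
  fun j => Real.sign (x j)

/-- The vector `d(x) = A_I (A_IᵗA_I)⁻¹ sign(x_I)`. -/
noncomputable def dvec {n m : ℕ} (A : Matrix (Fin n) (Fin m) ℝ) (I : Finset (Fin m))
    (x : Fin m → ℝ) : Fin n → ℝ :=
  (colSub A I).mulVec ((gram A I)⁻¹.mulVec (signI x I))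

/-- The identification coefficient `IC(x) = max_{j ∉ I} |a_jᵗ d(x)|`. -/
noncomputable def IC {n m : ℕ} (A : Matrix (Fin n) (Fin m) ℝ) (I : Finset (Fin m))
    (x : Fin m → ℝ) : ℝ :=
  sSup {y | ∃ j ∉ I, y = |∑ i, A i j * dvec A I x i|}

/-- Restriction of `x` to `I`, extended by zero. -/
def restr {m : ℕ} (I : Finset (Fin m)) (x : Fin m → ℝ) : Fin m → ℝ :=
  fun i => if i ∈ I then x i else 0

/-! Write `h = x⋆ − x⁰`, `s = sign x⁰_I`, `G = A_IᵗA_I` and `d = A_IG⁻¹s`. Feasibility of both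
points gives `‖Ah‖₂ ≤ 2ε`, and minimality of `x⋆` puts `h` in the descent cone
`‖h_{Iᶜ}‖₁ ≤ −⟨s, h_I⟩`. Since `A_Iᵗd = s` and `|a_jᵗd| ≤ 1/4` off `I`, pairing `d` with `Ah`
gives `(3/4)‖h_{Iᶜ}‖₁ ≤ ‖d‖₂‖Ah‖₂`, and `‖d‖₂² = sᵗG⁻¹s ≤ 2p`. On the support,
`h_I = G⁻¹A_Iᵗ(Ah − A h_{Iᶜ})`; the pseudo-inverse `G⁻¹A_Iᵗ` has norm at most `√‖G⁻¹‖ ≤ √2`,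
unit columns give `‖A h_{Iᶜ}‖₂ ≤ ‖h_{Iᶜ}‖₁`, and `‖h_I‖₁ ≤ √p‖h_I‖₂` finishes. -/

section Norms

variable {ι : Type*} [Fintype ι]

lemma l2_nonneg (x : ι → ℝ) : 0 ≤ l2 x := Real.sqrt_nonneg _

lemma l2_eq_norm_toLp (x : ι → ℝ) : l2 x = ‖WithLp.toLp 2 x‖ := by
  simp [EuclideanSpace.norm_eq, l2]

lemma l2_eq_zero {x : ι → ℝ} (hx : l2 x = 0) : x = 0 := by
  rw [l2_eq_norm_toLp, norm_eq_zero] at hx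
  simpa using congrArg WithLp.ofLp hx

lemma l2_add_le (x y : ι → ℝ) : l2 (x + y) ≤ l2 x + l2 y := by
  simpa only [l2_eq_norm_toLp, WithLp.toLp_add] using norm_add_le _ _

lemma l2_neg (x : ι → ℝ) : l2 (-x) = l2 x := by simp [l2]

lemma l2_sub_le (x y : ι → ℝ) : l2 (x - y) ≤ l2 x + l2 y := by
  simpa only [sub_eq_add_neg, l2_neg] using l2_add_le x (-y)

lemma l2_smul (c : ℝ) (x : ι → ℝ) : l2 (c • x) = |c| * l2 x := by
  simp only [l2_eq_norm_toLp, WithLp.toLp_smul, norm_smul, Real.norm_eq_abs]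

lemma l2_sum_le {κ : Type*} (s : Finset κ) (f : κ → ι → ℝ) :
    l2 (∑ j ∈ s, f j) ≤ ∑ j ∈ s, l2 (f j) := by
  simpa only [l2_eq_norm_toLp, WithLp.toLp_sum] using norm_sum_le _ _

lemma dotProduct_self_eq_l2_sq (x : ι → ℝ) : x ⬝ᵥ x = l2 x ^ 2 := by
  rw [l2, Real.sq_sqrt (by positivity)]
  simp [dotProduct, sq]

lemma dotProduct_le_l2_mul_l2 (x y : ι → ℝ) : x ⬝ᵥ y ≤ l2 x * l2 y :=
  Real.sum_mul_le_sqrt_mul_sqrt _ x y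

lemma l1_le_sqrt_card_mul_l2 (x : ι → ℝ) : l1 x ≤ √(Fintype.card ι) * l2 x := by
  have h := Real.sum_mul_le_sqrt_mul_sqrt univ (fun i => |x i|) (fun _ => 1)
  simp only [mul_one, sq_abs, one_pow, sum_const, card_univ, nsmul_eq_mul] at h
  rw [l1, mul_comm]
  simpa [l2] using h

lemma sum_abs_le_sqrt_card_mul_l2 {κ : Type*} (I : Finset κ) (x : κ → ℝ) :
    ∑ i ∈ I, |x i| ≤ √(#I) * l2 (fun j : I => x j) := by
  have h := l1_le_sqrt_card_mul_l2 (fun j : I => x j)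
  rwa [Fintype.card_coe, l1, sum_coe_sort I fun i => |x i|] at h

lemma dotProduct_mulVec_self_le {M : Matrix ι ι ℝ} {c : ℝ}
    (hM : ∀ u, l2 (M *ᵥ u) ≤ c * l2 u) (u : ι → ℝ) : u ⬝ᵥ M *ᵥ u ≤ c * l2 u ^ 2 :=
  calc u ⬝ᵥ M *ᵥ u ≤ l2 u * l2 (M *ᵥ u) := dotProduct_le_l2_mul_l2 _ _
    _ ≤ l2 u * (c * l2 u) := mul_le_mul_of_nonneg_left (hM u) (l2_nonneg u)
    _ = c * l2 u ^ 2 := by ring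

lemma l2_mulVec_sq {κ : Type*} [Fintype κ] (B : Matrix ι κ ℝ) (u : κ → ℝ) :
    l2 (B *ᵥ u) ^ 2 = u ⬝ᵥ (Bᵀ * B) *ᵥ u := by
  rw [← dotProduct_self_eq_l2_sq, ← mulVec_mulVec, dotProduct_mulVec u, vecMul_transpose]

lemma l2_mulVec_sub_le {κ : Type*} [Fintype κ] {A : Matrix ι κ ℝ} {x x' : κ → ℝ} {y : ι → ℝ}
    {ε : ℝ} (hx : l2 (A *ᵥ x - y) ≤ ε) (hx' : l2 (A *ᵥ x' - y) ≤ ε) :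
    l2 (A *ᵥ (x - x')) ≤ 2 * ε := by
  rw [mulVec_sub, ← sub_sub_sub_cancel_right _ _ y, two_mul]
  exact (l2_sub_le _ _).trans (add_le_add hx hx')

lemma l2_mulVec_le_l1 {κ : Type*} [Fintype κ] {A : Matrix ι κ ℝ}
    (hA : ∀ j, l2 (fun i => A i j) ≤ 1) (x : κ → ℝ) : l2 (A *ᵥ x) ≤ l1 x := by
  have hcols : A *ᵥ x = ∑ j, x j • fun i => A i j := by
    ext i; simp [mulVec, dotProduct, mul_comm]
  calc l2 (A *ᵥ x) ≤ ∑ j, l2 (x j • fun i => A i j) := hcols ▸ l2_sum_le _ _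
    _ ≤ ∑ j, |x j| := sum_le_sum fun j _ => by
        rw [l2_smul]; exact mul_le_of_le_one_right (abs_nonneg _) (hA j)

lemma l2_mulVec_le_of_opNorm2_le {κ : Type*} [Fintype κ] {M : Matrix ι κ ℝ} {c : ℝ}
    (hM : opNorm2 M ≤ c) (x : κ → ℝ) : l2 (M *ᵥ x) ≤ c * l2 x := by
  classical
  set T := LinearMap.toContinuousLinearMap (toEuclideanLin M)
  have hT : ∀ v, l2 (M *ᵥ v) ≤ ‖T‖ * l2 v := fun v => by
    simpa [T, l2_eq_norm_toLp, toLpLin_toLp] using T.le_opNorm (WithLp.toLp 2 v)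
  have hbdd : BddAbove {y | ∃ v : κ → ℝ, l2 v ≤ 1 ∧ y = l2 (M *ᵥ v)} :=
    ⟨‖T‖, by rintro _ ⟨v, hv, rfl⟩; nlinarith [hT v, norm_nonneg T, l2_nonneg v]⟩
  rcases (l2_nonneg x).eq_or_lt with hx | hx
  · simp [l2_eq_zero hx.symm, l2]
  have hunit := (le_csSup hbdd ⟨(l2 x)⁻¹ • x, by
    rw [l2_smul, abs_of_pos (inv_pos.2 hx), inv_mul_cancel₀ hx.ne'], rfl⟩).trans hM
  rwa [mulVec_smul, l2_smul, abs_of_pos (inv_pos.2 hx), inv_mul_le_iff₀ hx, mul_comm] at hunit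

end Norms

section Gram

variable {ι κ : Type*} [Fintype ι] [Fintype κ] [DecidableEq κ] {B : Matrix ι κ ℝ}

lemma dotProduct_gram_inv_mulVec_comm (u v : κ → ℝ) :
    u ⬝ᵥ (Bᵀ * B)⁻¹ *ᵥ v = ((Bᵀ * B)⁻¹ *ᵥ u) ⬝ᵥ v := by
  rw [dotProduct_mulVec, ← mulVec_transpose, transpose_nonsing_inv, transpose_mul,
    transpose_transpose]

lemma transpose_mulVec_mulVec_gram_inv_mulVec (hB : IsUnit (Bᵀ * B).det) (u : κ → ℝ) :
    Bᵀ *ᵥ B *ᵥ (Bᵀ * B)⁻¹ *ᵥ u = u := by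
  rw [mulVec_mulVec, mulVec_mulVec, mul_nonsing_inv _ hB, one_mulVec]

lemma gram_inv_mulVec_transpose_mulVec_mulVec (hB : IsUnit (Bᵀ * B).det) (u : κ → ℝ) :
    (Bᵀ * B)⁻¹ *ᵥ Bᵀ *ᵥ B *ᵥ u = u := by
  rw [mulVec_mulVec, mulVec_mulVec, Matrix.mul_assoc, nonsing_inv_mul _ hB, one_mulVec]

lemma l2_mulVec_gram_inv_mulVec_sq (hB : IsUnit (Bᵀ * B).det) (u : κ → ℝ) :
    l2 (B *ᵥ (Bᵀ * B)⁻¹ *ᵥ u) ^ 2 = u ⬝ᵥ (Bᵀ * B)⁻¹ *ᵥ u := by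
  rw [l2_mulVec_sq, mulVec_mulVec, mul_nonsing_inv _ hB, one_mulVec,
    ← dotProduct_gram_inv_mulVec_comm]

lemma l2_mulVec_gram_inv_mulVec_le (hB : IsUnit (Bᵀ * B).det) {c : ℝ}
    (hc : ∀ u, l2 ((Bᵀ * B)⁻¹ *ᵥ u) ≤ c * l2 u) (u : κ → ℝ) :
    l2 (B *ᵥ (Bᵀ * B)⁻¹ *ᵥ u) ≤ √c * l2 u := by
  rw [← Real.sqrt_sq (l2_nonneg u), ← Real.sqrt_mul' _ (sq_nonneg _)]
  apply Real.le_sqrt_of_sq_le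
  rw [l2_mulVec_gram_inv_mulVec_sq hB]
  exact dotProduct_mulVec_self_le hc u

lemma l2_gram_inv_mulVec_transpose_mulVec_le (hB : IsUnit (Bᵀ * B).det) {c : ℝ}
    (hc : ∀ u, l2 ((Bᵀ * B)⁻¹ *ᵥ u) ≤ c * l2 u) (v : ι → ℝ) :
    l2 ((Bᵀ * B)⁻¹ *ᵥ Bᵀ *ᵥ v) ≤ √c * l2 v := by
  set w := (Bᵀ * B)⁻¹ *ᵥ Bᵀ *ᵥ v
  have hw : l2 w ^ 2 ≤ √c * l2 w * l2 v :=
    calc l2 w ^ 2 = (B *ᵥ (Bᵀ * B)⁻¹ *ᵥ w) ⬝ᵥ v := by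
          rw [← dotProduct_self_eq_l2_sq, dotProduct_gram_inv_mulVec_comm, dotProduct_mulVec,
            vecMul_transpose]
      _ ≤ l2 (B *ᵥ (Bᵀ * B)⁻¹ *ᵥ w) * l2 v := dotProduct_le_l2_mul_l2 _ _
      _ ≤ √c * l2 w * l2 v :=
          mul_le_mul_of_nonneg_right (l2_mulVec_gram_inv_mulVec_le hB hc w) (l2_nonneg v)
  rcases (l2_nonneg w).eq_or_lt with hw0 | hw0
  · rw [← hw0]; exact mul_nonneg (Real.sqrt_nonneg c) (l2_nonneg v)
  · exact le_of_mul_le_mul_left (by linarith) hw0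

end Gram

lemma Real.sign_mul_self_eq_abs (r : ℝ) : Real.sign r * r = |r| := by
  rcases lt_trichotomy r 0 with hr | rfl | hr
  · rw [Real.sign_of_neg hr, abs_of_neg hr]; ring
  · simp
  · rw [Real.sign_of_pos hr, abs_of_pos hr]; ring

lemma Real.abs_sign_le_one (r : ℝ) : |Real.sign r| ≤ 1 := by
  rcases Real.sign_apply_eq r with h | h | h <;> simp [h]

section Support

variable {κ : Type*} [Fintype κ] [DecidableEq κ] {I : Finset κ}

lemma sum_compl_abs_le_neg_sum_sign_mul {x h : κ → ℝ} (hx : ∀ i ∉ I, x i = 0)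
    (hl1 : l1 (x + h) ≤ l1 x) : ∑ i ∈ Iᶜ, |h i| ≤ -∑ i ∈ I, Real.sign (x i) * h i := by
  have hI : ∀ i ∈ I, |x i| + Real.sign (x i) * h i ≤ |x i + h i| := fun i _ =>
    calc |x i| + Real.sign (x i) * h i = Real.sign (x i) * (x i + h i) := by
          rw [mul_add, Real.sign_mul_self_eq_abs]
      _ ≤ |Real.sign (x i) * (x i + h i)| := le_abs_self _
      _ ≤ |x i + h i| := by
          rw [abs_mul]; exact mul_le_of_le_one_left (abs_nonneg _) (Real.abs_sign_le_one _)
  have hIc : ∀ i ∈ Iᶜ, |x i + h i| = |h i| := fun i hi => by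
    rw [hx i (mem_compl.1 hi), zero_add]
  have hx1 : l1 x = ∑ i ∈ I, |x i| := by
    rw [l1, ← sum_add_sum_compl I, add_eq_left]
    exact sum_eq_zero fun i hi => by rw [hx i (mem_compl.1 hi), abs_zero]
  have key : ∑ i ∈ I, (|x i| + Real.sign (x i) * h i) + ∑ i ∈ Iᶜ, |h i| ≤ ∑ i ∈ I, |x i| :=
    calc _ ≤ ∑ i ∈ I, |x i + h i| + ∑ i ∈ Iᶜ, |x i + h i| :=
          add_le_add (sum_le_sum hI) (sum_congr rfl hIc).ge
      _ = l1 (x + h) := sum_add_sum_compl _ _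
      _ ≤ ∑ i ∈ I, |x i| := hx1 ▸ hl1
  rw [sum_add_distrib] at key
  linarith

lemma one_sub_mul_sum_compl_abs_le {ι : Type*} [Fintype ι] {A : Matrix ι κ ℝ} {d : ι → ℝ}
    {h : κ → ℝ} {c : ℝ} (hcone : ∑ j ∈ Iᶜ, |h j| ≤ -∑ j ∈ I, (Aᵀ *ᵥ d) j * h j)
    (hoff : ∀ j ∉ I, |(Aᵀ *ᵥ d) j| ≤ c) :
    (1 - c) * ∑ j ∈ Iᶜ, |h j| ≤ l2 d * l2 (A *ᵥ h) := by
  have hsplit : d ⬝ᵥ A *ᵥ h = ∑ j ∈ I, (Aᵀ *ᵥ d) j * h j + ∑ j ∈ Iᶜ, (Aᵀ *ᵥ d) j * h j := by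
    rw [dotProduct_mulVec, ← mulVec_transpose, dotProduct, sum_add_sum_compl]
  have hcs : -(d ⬝ᵥ A *ᵥ h) ≤ l2 d * l2 (A *ᵥ h) := by
    simpa only [neg_dotProduct, l2_neg] using dotProduct_le_l2_mul_l2 (-d) (A *ᵥ h)
  have hIc : ∑ j ∈ Iᶜ, (Aᵀ *ᵥ d) j * h j ≤ c * ∑ j ∈ Iᶜ, |h j| := by
    rw [mul_sum]
    refine sum_le_sum fun j hj => ?_
    calc _ ≤ |(Aᵀ *ᵥ d) j * h j| := le_abs_self _
      _ ≤ c * |h j| := by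
          rw [abs_mul]
          exact mul_le_mul_of_nonneg_right (hoff j (mem_compl.1 hj)) (abs_nonneg _)
  linarith

end Support

section Recovery

variable {n m : ℕ} (A : Matrix (Fin n) (Fin m) ℝ) (I : Finset (Fin m))

lemma mulVec_restr (x : Fin m → ℝ) : A *ᵥ restr I x = colSub A I *ᵥ fun j => x j := by
  ext i
  simp only [mulVec, dotProduct, restr, colSub, mul_ite, mul_zero]
  rw [sum_ite_mem, univ_inter, ← sum_coe_sort I]

lemma l1_sub_restr (x : Fin m → ℝ) : l1 (x - restr I x) = ∑ i ∈ Iᶜ, |x i| := by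
  rw [l1, ← sum_add_sum_compl I, sum_eq_zero fun i hi => by simp [restr, hi], zero_add]
  exact sum_congr rfl fun i hi => by simp [restr, mem_compl.1 hi]

lemma colSub_transpose_mulVec_dvec (hinv : IsUnit (gram A I).det) (x : Fin m → ℝ) :
    (colSub A I)ᵀ *ᵥ dvec A I x = signI x I :=
  transpose_mulVec_mulVec_gram_inv_mulVec (B := colSub A I) hinv _

lemma transpose_mulVec_dvec_of_mem (hinv : IsUnit (gram A I).det) (x : Fin m → ℝ) {j : Fin m}
    (hj : j ∈ I) : (Aᵀ *ᵥ dvec A I x) j = Real.sign (x j) :=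
  congrFun (colSub_transpose_mulVec_dvec A I hinv x) ⟨j, hj⟩

lemma abs_transpose_mulVec_dvec_le_IC (x : Fin m → ℝ) {j : Fin m} (hj : j ∉ I) :
    |(Aᵀ *ᵥ dvec A I x) j| ≤ IC A I x := by
  refine le_csSup (Set.Finite.bddAbove ?_) ⟨j, hj, rfl⟩
  refine (Set.finite_range fun j => |∑ i, A i j * dvec A I x i|).subset ?_
  rintro _ ⟨j, -, rfl⟩
  exact ⟨j, rfl⟩

lemma l2_signI_le (x : Fin m → ℝ) : l2 (signI x I) ≤ √(#I) := by
  refine Real.sqrt_le_sqrt ((sum_le_sum fun j _ => ?_).trans_eq (b := ∑ _j : I, (1 : ℝ)) ?_)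
  · rw [← sq_abs]
    exact pow_le_one₀ (abs_nonneg _) (Real.abs_sign_le_one _)
  · simp

variable {A I}

lemma l2_dvec_le (hinv : IsUnit (gram A I).det) {c : ℝ}
    (hc : ∀ u, l2 ((gram A I)⁻¹ *ᵥ u) ≤ c * l2 u) (x : Fin m → ℝ) :
    l2 (dvec A I x) ≤ √c * √(#I) :=
  (l2_mulVec_gram_inv_mulVec_le (B := colSub A I) hinv hc _).trans
    (mul_le_mul_of_nonneg_left (l2_signI_le I x) (Real.sqrt_nonneg c))

lemma l2_restrict_le (hinv : IsUnit (gram A I).det) {c : ℝ}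
    (hc : ∀ u, l2 ((gram A I)⁻¹ *ᵥ u) ≤ c * l2 u)
    (hA : ∀ j, l2 (fun i => A i j) ≤ 1) (h : Fin m → ℝ) :
    l2 (fun j : I => h j) ≤ √c * (l2 (A *ᵥ h) + ∑ j ∈ Iᶜ, |h j|) := by
  have hsolve : (fun j : I => h j)
      = (gram A I)⁻¹ *ᵥ (colSub A I)ᵀ *ᵥ (A *ᵥ h - A *ᵥ (h - restr I h)) := by
    rw [← mulVec_sub, sub_sub_cancel, mulVec_restr]
    exact (gram_inv_mulVec_transpose_mulVec_mulVec (B := colSub A I) hinv _).symm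
  rw [hsolve, ← l1_sub_restr]
  refine (l2_gram_inv_mulVec_transpose_mulVec_le (B := colSub A I) hinv hc _).trans ?_
  gcongr
  exact (l2_sub_le _ _).trans (add_le_add le_rfl (l2_mulVec_le_l1 hA _))

end Recovery

/-- ℓ¹ error bound `‖x⋆ − x⁰‖₁ ≤ (ε/3)(14√(2p) + 16p)`. -/
theorem l1_error_bound {n m p : ℕ} (A : Matrix (Fin n) (Fin m) ℝ)
    (x0 xs : Fin m → ℝ) (b y : Fin n → ℝ) (ε : ℝ)
    (I : Finset (Fin m)) (hI : ∀ i, i ∈ I ↔ x0 i ≠ 0) (hp : I.card = p)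
    (hcols : ∀ j, l2 (fun i => A i j) = 1)
    (hinv : IsUnit (gram A I).det)
    (hgram : opNorm2 ((gram A I)⁻¹) ≤ 2)
    (hIC : IC A I x0 ≤ 1 / 4)
    (hy : y = A.mulVec x0 + b) (hb : l2 b ≤ ε)
    (hfeas : l2 (A.mulVec xs - y) ≤ ε)
    (hmin : ∀ x : Fin m → ℝ, l2 (A.mulVec x - y) ≤ ε → l1 xs ≤ l1 x) :
    l1 (xs - x0) ≤ ε / 3 * (14 * Real.sqrt (2 * p) + 16 * p) := by
  subst hp
  have hG := l2_mulVec_le_of_opNorm2_le hgram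
  have hx0 : l2 (A *ᵥ x0 - y) ≤ ε := by rwa [hy, sub_add_cancel_left, l2_neg]
  set h := xs - x0
  have hAh : l2 (A *ᵥ h) ≤ 2 * ε := l2_mulVec_sub_le hfeas hx0
  have hcone : ∑ j ∈ Iᶜ, |h j| ≤ -∑ j ∈ I, (Aᵀ *ᵥ dvec A I x0) j * h j := by
    have hsign : ∑ j ∈ I, (Aᵀ *ᵥ dvec A I x0) j * h j = ∑ j ∈ I, Real.sign (x0 j) * h j :=
      sum_congr rfl fun j hj => by rw [transpose_mulVec_dvec_of_mem A I hinv x0 hj]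
    rw [hsign]
    refine sum_compl_abs_le_neg_sum_sign_mul (fun i hi => not_not.1 (mt (hI i).2 hi)) ?_
    rw [add_sub_cancel]
    exact hmin x0 hx0
  have hoff := one_sub_mul_sum_compl_abs_le hcone
    fun j hj => (abs_transpose_mulVec_dvec_le_IC A I x0 hj).trans hIC
  have hd := l2_dvec_le hinv hG x0
  have hl1I := sum_abs_le_sqrt_card_mul_l2 I h
  have hl2I := l2_restrict_le hinv hG (fun j => (hcols j).le) h
  rw [l1, ← sum_add_sum_compl I, Real.sqrt_mul zero_le_two]
  set L := ∑ j ∈ Iᶜ, |h j|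
  have hS0 : 0 ≤ √2 * √(#I : ℝ) := by positivity
  have hS : (√2 * √(#I : ℝ)) ^ 2 = 2 * #I := by
    rw [mul_pow, Real.sq_sqrt zero_le_two, Real.sq_sqrt (Nat.cast_nonneg _)]
  have hL : L ≤ 8 / 3 * ε * (√2 * √(#I)) := by
    linarith [mul_le_mul hd hAh (l2_nonneg _) hS0]
  calc ∑ j ∈ I, |h j| + L ≤ √(#I) * (√2 * (2 * ε + L)) + L := by
        gcongr
        exact hl1I.trans (by gcongr; exact hl2I.trans (by gcongr))
    _ ≤ ε / 3 * (14 * (√2 * √(#I)) + 16 * #I) := by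
        nlinarith [mul_nonneg (add_nonneg hS0 zero_le_one) (sub_nonneg.2 hL),
          congrArg (ε * ·) hS]
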